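/- arXiv:2202.07512 — 9 statements merged into one kernel-verified Lean document; each statement's English description precedes it below -/
import Mathlib

section
/- With the setup of the linearisation (w solving w'' + p w' + q w = 0, W the Wronskian with a second solution w̃, z = w̃/w, g = w w'/W, and d/dz = (w²/W) d/ds), one has the identity g'' − 6 g g' + 4 g³ = −(q' + 2 p q) w⁶ / W³, where primes on g denote d/dz and q' denotes dq/ds. -/
/-!
Abel's identity `W' = -p W` lets every derivative of a quotient by a power of `W` be computed
without ever differentiating `wt`. Thus `dg/ds = (w'² - q w²)/W`, so `g' = w² (w'² - q w²)/W²`,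
and differentiating once more, with `w'' = -p w' - q w`, gives
`d g'/ds = (2 w w'³ - 6 q w³ w' - (q' + 2 p q) w⁴)/W²`. In `g'' - 6 g g' + 4 g³` the terms in
`w³ w'³` and `q w⁵ w'` then cancel, leaving only the `q' + 2 p q` term.
-/

open Filter Set

def wronskian (w w' wt wt' : ℝ → ℝ) : ℝ → ℝ := fun t => wt' t * w t - w' t * wt t

theorem HasDerivAt.eq_of_eqOn {I : Set ℝ} (hI : IsOpen I) {f F : ℝ → ℝ} {a b s : ℝ}
    (hs : s ∈ I) (hfF : EqOn f F I) (hf : HasDerivAt f a s) (hF : HasDerivAt F b s) :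
    a = b :=
  hf.unique (hF.congr_of_eventuallyEq (eventuallyEq_of_mem (hI.mem_nhds hs) hfF))

section Linearisation

variable {p q q' w w' w'' wt wt' wt'' : ℝ → ℝ} {s : ℝ}

theorem hasDerivAt_wronskian (hw : HasDerivAt w (w' s) s) (hw' : HasDerivAt w' (w'' s) s)
    (hwt : HasDerivAt wt (wt' s) s) (hwt' : HasDerivAt wt' (wt'' s) s)
    (hODEw : w'' s + p s * w' s + q s * w s = 0)
    (hODEwt : wt'' s + p s * wt' s + q s * wt s = 0) :
    HasDerivAt (wronskian w w' wt wt') (-p s * wronskian w w' wt wt' s) s := by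
  refine ((hwt'.mul hw).sub (hw'.mul hwt)).congr_deriv ?_
  simp only [wronskian]
  linear_combination w s * hODEwt - wt s * hODEw

theorem hasDerivAt_mul_div_wronskian (hw : HasDerivAt w (w' s) s)
    (hw' : HasDerivAt w' (w'' s) s) (hwt : HasDerivAt wt (wt' s) s)
    (hwt' : HasDerivAt wt' (wt'' s) s) (hODEw : w'' s + p s * w' s + q s * w s = 0)
    (hODEwt : wt'' s + p s * wt' s + q s * wt s = 0) (hW : wronskian w w' wt wt' s ≠ 0) :
    HasDerivAt (fun t => w t * w' t / wronskian w w' wt wt' t)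
      ((w' s ^ 2 - q s * w s ^ 2) / wronskian w w' wt wt' s) s := by
  refine ((hw.mul hw').div (hasDerivAt_wronskian hw hw' hwt hwt' hODEw hODEwt) hW).congr_deriv
    ?_
  simp only [Pi.mul_apply]
  field_simp
  linear_combination w s * hODEw

theorem hasDerivAt_sq_mul_div_wronskian_sq (hq : HasDerivAt q (q' s) s)
    (hw : HasDerivAt w (w' s) s) (hw' : HasDerivAt w' (w'' s) s)
    (hwt : HasDerivAt wt (wt' s) s) (hwt' : HasDerivAt wt' (wt'' s) s)
    (hODEw : w'' s + p s * w' s + q s * w s = 0)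
    (hODEwt : wt'' s + p s * wt' s + q s * wt s = 0) (hW : wronskian w w' wt wt' s ≠ 0) :
    HasDerivAt (fun t => w t ^ 2 * (w' t ^ 2 - q t * w t ^ 2) / wronskian w w' wt wt' t ^ 2)
      ((2 * w s * w' s ^ 3 - 6 * q s * w s ^ 3 * w' s - (q' s + 2 * p s * q s) * w s ^ 4)
        / wronskian w w' wt wt' s ^ 2) s := by
  have hWd := hasDerivAt_wronskian hw hw' hwt hwt' hODEw hODEwt
  refine (((hw.pow 2).mul ((hw'.pow 2).sub (hq.mul (hw.pow 2)))).div (hWd.pow 2)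
    (pow_ne_zero 2 hW)).congr_deriv ?_
  simp only [Pi.mul_apply, Pi.pow_apply, Pi.sub_apply, Nat.cast_ofNat, Nat.reduceSub, pow_one]
  field_simp
  linear_combination 2 * w s ^ 2 * w' s * hODEw

end Linearisation

theorem abel_linearisation_second_invariant_general
    (I : Set ℝ) (hI : IsOpen I)
    (p q q' w w' w'' wt wt' wt'' g dg g1 dg1 : ℝ → ℝ)
    (hq : ∀ s ∈ I, HasDerivAt q (q' s) s)
    (hw : ∀ s ∈ I, HasDerivAt w (w' s) s)
    (hw' : ∀ s ∈ I, HasDerivAt w' (w'' s) s)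
    (hwt : ∀ s ∈ I, HasDerivAt wt (wt' s) s)
    (hwt' : ∀ s ∈ I, HasDerivAt wt' (wt'' s) s)
    (hODEw : ∀ s ∈ I, w'' s + p s * w' s + q s * w s = 0)
    (hODEwt : ∀ s ∈ I, wt'' s + p s * wt' s + q s * wt s = 0)
    (hW0 : ∀ s ∈ I, wt' s * w s - w' s * wt s ≠ 0)
    (hg : ∀ s ∈ I, g s = w s * w' s / (wt' s * w s - w' s * wt s))
    (hdg : ∀ s ∈ I, HasDerivAt g (dg s) s)
    (hg1 : ∀ s ∈ I, g1 s = (w s) ^ 2 / (wt' s * w s - w' s * wt s) * dg s)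
    (hdg1 : ∀ s ∈ I, HasDerivAt g1 (dg1 s) s) :
    ∀ s ∈ I,
      (w s) ^ 2 / (wt' s * w s - w' s * wt s) * dg1 s
          - 6 * g s * g1 s + 4 * (g s) ^ 3
        = - (q' s + 2 * p s * q s) * (w s) ^ 6
            / (wt' s * w s - w' s * wt s) ^ 3 := by
  have hdg_eq : ∀ t ∈ I, dg t = (w' t ^ 2 - q t * w t ^ 2) / wronskian w w' wt wt' t :=
    fun t ht => (hdg t ht).eq_of_eqOn hI ht hg <| hasDerivAt_mul_div_wronskian (hw t ht)
      (hw' t ht) (hwt t ht) (hwt' t ht) (hODEw t ht) (hODEwt t ht) (hW0 t ht)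
  have hg1_eq : ∀ t ∈ I,
      g1 t = w t ^ 2 * (w' t ^ 2 - q t * w t ^ 2) / wronskian w w' wt wt' t ^ 2 := by
    intro t ht
    rw [hg1 t ht, hdg_eq t ht, div_mul_div_comm, sq (wronskian w w' wt wt' t)]
    rfl
  intro s hs
  have hdg1_eq := (hdg1 s hs).eq_of_eqOn hI hs hg1_eq <| hasDerivAt_sq_mul_div_wronskian_sq
    (hq s hs) (hw s hs) (hw' s hs) (hwt s hs) (hwt' s hs) (hODEw s hs) (hODEwt s hs) (hW0 s hs)
  have hW := hW0 s hs
  rw [hdg1_eq, hg s hs, hg1_eq s hs, wronskian]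
  field_simp
  ring

/-- with `g = w w'/W`, `z = w̃/w`, and `d/dz = (w²/W)·d/ds`,
one has `g'' − 6 g g' + 4 g³ = −(q' + 2 p q) w⁶/W³`. -/
theorem abel_linearisation_second_invariant
    (I : Set ℝ) (hI : IsOpen I)
    (p q q' w w' w'' wt wt' wt'' g dg g1 dg1 : ℝ → ℝ)
    (hq : ∀ s ∈ I, HasDerivAt q (q' s) s)
    (hw : ∀ s ∈ I, HasDerivAt w (w' s) s)
    (hw' : ∀ s ∈ I, HasDerivAt w' (w'' s) s)
    (hwt : ∀ s ∈ I, HasDerivAt wt (wt' s) s)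
    (hwt' : ∀ s ∈ I, HasDerivAt wt' (wt'' s) s)
    (hODEw : ∀ s ∈ I, w'' s + p s * w' s + q s * w s = 0)
    (hODEwt : ∀ s ∈ I, wt'' s + p s * wt' s + q s * wt s = 0)
    (hw0 : ∀ s ∈ I, w s ≠ 0)
    (hW0 : ∀ s ∈ I, wt' s * w s - w' s * wt s ≠ 0)
    (hg : ∀ s ∈ I, g s = w s * w' s / (wt' s * w s - w' s * wt s))
    (hdg : ∀ s ∈ I, HasDerivAt g (dg s) s)
    (hg1 : ∀ s ∈ I, g1 s = (w s) ^ 2 / (wt' s * w s - w' s * wt s) * dg s)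
    (hdg1 : ∀ s ∈ I, HasDerivAt g1 (dg1 s) s) :
    ∀ s ∈ I,
      (w s) ^ 2 / (wt' s * w s - w' s * wt s) * dg1 s
          - 6 * g s * g1 s + 4 * (g s) ^ 3
        = - (q' s + 2 * p s * q s) * (w s) ^ 6
            / (wt' s * w s - w' s * wt s) ^ 3 :=
  abel_linearisation_second_invariant_general I hI p q q' w w' w'' wt wt' wt'' g dg g1 dg1 hq hw hw'
    hwt hwt' hODEw hODEwt hW0 hg hdg hg1 hdg1
end

section
/- For the hypergeometric coefficients p(s) = (γ − (1+α+β)s)/(s(1−s)) and q(s) = −αβ/(s(1−s)), the constraint q(q'' + 2p'q + 5q'p + 6p²q) + c₁(q' + 2pq)² − c₂ q³ = 0 holds identically in s (on s ∈ (0,1), αβ ≠ 0) if and only if the three algebraic relations hold: (4c₁+6)γ² − (4c₁+7)γ + c₁ + 2 = 0, (4c₁+6)(α+β)² − c₂ αβ = 0, and c₂ αβ − (8c₁+12)(α+β)γ + (4c₁+5)(α+β) + 2γ − 1 = 0. -/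
/-! Clearing the denominator `(s(1-s))⁴`, the constraint for the hypergeometric coefficients
becomes `(αβ)²` times a quadratic polynomial in `s`, whose constant, `s²` and `s` coefficients
are the three relations. A quadratic vanishing on `(0,1)` has vanishing coefficients. -/

/-- Coefficient `p` of the hypergeometric equation in normalized form. -/
noncomputable def hypergeomP (α β γ : ℝ) : ℝ → ℝ :=
  fun s => (γ - (1 + α + β) * s) / (s * (1 - s))

/-- Coefficient `q` of the hypergeometric equation in normalized form. -/
noncomputable def hypergeomQ (α β : ℝ) : ℝ → ℝ :=
  fun s => -(α * β) / (s * (1 - s))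

noncomputable def linearisingConstraint (p q : ℝ → ℝ) (c₁ c₂ s : ℝ) : ℝ :=
  q s * (deriv (deriv q) s + 2 * deriv p s * q s + 5 * deriv q s * p s + 6 * p s ^ 2 * q s)
    + c₁ * (deriv q s + 2 * p s * q s) ^ 2 - c₂ * q s ^ 3

theorem quadratic_eq_zero_on_Ioo_iff (a b c : ℝ) :
    (∀ s ∈ Set.Ioo (0 : ℝ) 1, a + b * s + c * s ^ 2 = 0) ↔ a = 0 ∧ b = 0 ∧ c = 0 := by
  refine ⟨fun h => ?_, fun ⟨ha, hb, hc⟩ s _ => by simp [ha, hb, hc]⟩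
  have h₁ := h (1 / 4) (by norm_num)
  have h₂ := h (1 / 2) (by norm_num)
  have h₃ := h (3 / 4) (by norm_num)
  exact ⟨by linarith, by linarith, by linarith⟩

section Derivatives

variable {α β γ s : ℝ}

theorem hasDerivAt_mul_one_sub (s : ℝ) : HasDerivAt (fun x : ℝ => x * (1 - x)) (1 - 2 * s) s :=
  ((hasDerivAt_id' s).mul ((hasDerivAt_id' s).const_sub 1)).congr_deriv (by ring)

theorem hasDerivAt_hypergeomP (hs : s * (1 - s) ≠ 0) :
    HasDerivAt (hypergeomP α β γ)
      ((-(1 + α + β) * (s * (1 - s)) - (γ - (1 + α + β) * s) * (1 - 2 * s)) / (s * (1 - s)) ^ 2)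
      s :=
  ((((hasDerivAt_id' s).const_mul (1 + α + β)).const_sub γ).fun_div
    (hasDerivAt_mul_one_sub s) hs).congr_deriv (by ring)

theorem hasDerivAt_hypergeomQ (hs : s * (1 - s) ≠ 0) :
    HasDerivAt (hypergeomQ α β) (α * β * (1 - 2 * s) / (s * (1 - s)) ^ 2) s :=
  ((hasDerivAt_const s (-(α * β))).fun_div (hasDerivAt_mul_one_sub s) hs).congr_deriv (by ring)

open Topology in
theorem deriv_hypergeomQ_eventuallyEq (hs : s * (1 - s) ≠ 0) :
    deriv (hypergeomQ α β) =ᶠ[𝓝 s] fun x => α * β * (1 - 2 * x) / (x * (1 - x)) ^ 2 := by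
  have hopen : IsOpen {x : ℝ | x * (1 - x) ≠ 0} := isOpen_ne_fun (by fun_prop) continuous_const
  filter_upwards [hopen.mem_nhds hs] with x hx
  exact (hasDerivAt_hypergeomQ hx).deriv

theorem hasDerivAt_deriv_hypergeomQ (hs : s * (1 - s) ≠ 0) :
    HasDerivAt (deriv (hypergeomQ α β))
      (α * β * (-2 * (s * (1 - s)) - 2 * (1 - 2 * s) ^ 2) / (s * (1 - s)) ^ 3) s := by
  refine HasDerivAt.congr_of_eventuallyEq ?_ (deriv_hypergeomQ_eventuallyEq hs)
  refine (((((hasDerivAt_id' s).const_mul 2).const_sub 1).const_mul (α * β)).fun_div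
    ((hasDerivAt_mul_one_sub s).fun_pow 2) (pow_ne_zero 2 hs)).congr_deriv ?_
  rw [div_eq_div_iff (pow_ne_zero 2 (pow_ne_zero 2 hs)) (pow_ne_zero 3 hs)]
  ring

end Derivatives

theorem linearisingConstraint_hypergeom (α β γ c₁ c₂ : ℝ) {s : ℝ} (hs : s * (1 - s) ≠ 0) :
    linearisingConstraint (hypergeomP α β γ) (hypergeomQ α β) c₁ c₂ s
      = (α * β) ^ 2 / (s * (1 - s)) ^ 4 *
          (((4 * c₁ + 6) * γ ^ 2 - (4 * c₁ + 7) * γ + c₁ + 2)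
            + (c₂ * (α * β) - (8 * c₁ + 12) * (α + β) * γ
                + (4 * c₁ + 5) * (α + β) + 2 * γ - 1) * s
            + ((4 * c₁ + 6) * (α + β) ^ 2 - c₂ * (α * β)) * s ^ 2) := by
  rw [linearisingConstraint, (hasDerivAt_deriv_hypergeomQ hs).deriv,
    (hasDerivAt_hypergeomQ hs).deriv, (hasDerivAt_hypergeomP hs).deriv]
  simp only [hypergeomP, hypergeomQ]
  field_simp
  ring

/-- for the hypergeometric coefficients, the linearising constraint
holds identically on `(0,1)` iff the three algebraic relations among
`α, β, γ, c₁, c₂` hold. -/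
theorem hypergeometric_constraint_iff
    (α β γ c₁ c₂ : ℝ) (hαβ : α * β ≠ 0) :
    (∀ s ∈ Set.Ioo (0 : ℝ) 1,
        hypergeomQ α β s *
            (deriv (deriv (hypergeomQ α β)) s
              + 2 * deriv (hypergeomP α β γ) s * hypergeomQ α β s
              + 5 * deriv (hypergeomQ α β) s * hypergeomP α β γ s
              + 6 * (hypergeomP α β γ s) ^ 2 * hypergeomQ α β s)
          + c₁ * (deriv (hypergeomQ α β) s
              + 2 * hypergeomP α β γ s * hypergeomQ α β s) ^ 2
          - c₂ * (hypergeomQ α β s) ^ 3 = 0)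
      ↔ ((4 * c₁ + 6) * γ ^ 2 - (4 * c₁ + 7) * γ + c₁ + 2 = 0 ∧
          (4 * c₁ + 6) * (α + β) ^ 2 - c₂ * (α * β) = 0 ∧
          c₂ * (α * β) - (8 * c₁ + 12) * (α + β) * γ
            + (4 * c₁ + 5) * (α + β) + 2 * γ - 1 = 0) := by
  have hden : ∀ s ∈ Set.Ioo (0 : ℝ) 1, s * (1 - s) ≠ 0 := fun s hs =>
    (mul_pos hs.1 (sub_pos.2 hs.2)).ne'
  calc (∀ s ∈ Set.Ioo (0 : ℝ) 1,
          linearisingConstraint (hypergeomP α β γ) (hypergeomQ α β) c₁ c₂ s = 0)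
      ↔ ∀ s ∈ Set.Ioo (0 : ℝ) 1,
          ((4 * c₁ + 6) * γ ^ 2 - (4 * c₁ + 7) * γ + c₁ + 2)
            + (c₂ * (α * β) - (8 * c₁ + 12) * (α + β) * γ
                + (4 * c₁ + 5) * (α + β) + 2 * γ - 1) * s
            + ((4 * c₁ + 6) * (α + β) ^ 2 - c₂ * (α * β)) * s ^ 2 = 0 :=
        forall₂_congr fun s hs => by
          rw [linearisingConstraint_hypergeom α β γ c₁ c₂ (hden s hs),
            mul_eq_zero_iff_left (div_ne_zero (pow_ne_zero 2 hαβ) (pow_ne_zero 4 (hden s hs)))]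
    _ ↔ _ := (quadratic_eq_zero_on_Ioo_iff _ _ _).trans (by tauto)
end

section
/- The function R(z) defined implicitly by 20(1−3R²)³ − 27(z + 14R³ − 4R)² = 0 satisfies the Kudashev equation dR/dz = (486R⁴ − 171R² + 9zR + 5) / (9(54R³ − 9R + z)(2R + 3z)) at every point where the implicit relation defines R as a differentiable function of z and the denominator is nonzero. -/
/-- a differentiable function `R(z)` satisfying the implicit
relation `20(1−3R²)³ = 27(z + 14R³ − 4R)²` satisfies the Kudashev equation
`dR/dz = (486R⁴ − 171R² + 9zR + 5)/(9(54R³ − 9R + z)(2R + 3z))` at every point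
where the denominator and the `R`-partial derivative of the defining
polynomial are nonzero. -/
theorem algebraic_solution_satisfies_kudashev
    (I : Set ℝ) (hI : IsOpen I) (R R' : ℝ → ℝ)
    (hR : ∀ z ∈ I, HasDerivAt R (R' z) z)
    (himpl : ∀ z ∈ I,
      20 * (1 - 3 * (R z) ^ 2) ^ 3 = 27 * (z + 14 * (R z) ^ 3 - 4 * R z) ^ 2)
    (z₀ : ℝ) (hz₀ : z₀ ∈ I)
    (hden : 9 * (54 * (R z₀) ^ 3 - 9 * R z₀ + z₀) * (2 * R z₀ + 3 * z₀) ≠ 0)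
    (hFR : -360 * R z₀ * (1 - 3 * (R z₀) ^ 2) ^ 2
        - 54 * (z₀ + 14 * (R z₀) ^ 3 - 4 * R z₀) * (42 * (R z₀) ^ 2 - 4) ≠ 0) :
    R' z₀ = (486 * (R z₀) ^ 4 - 171 * (R z₀) ^ 2 + 9 * z₀ * R z₀ + 5)
      / (9 * (54 * (R z₀) ^ 3 - 9 * R z₀ + z₀) * (2 * R z₀ + 3 * z₀)) := by
  have hRz := hR z₀ hz₀
  -- derivative of the left side of the implicit relation
  have h1 : HasDerivAt (fun z => 20 * (1 - 3 * (R z) ^ 2) ^ 3)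
      (20 * ((3 : ℕ) * (1 - 3 * (R z₀) ^ 2) ^ 2 *
        (-(3 * ((2 : ℕ) * R z₀ ^ 1 * R' z₀))))) z₀ := by
    exact ((((hRz.pow 2).const_mul 3).const_sub 1).pow 3).const_mul 20
  -- derivative of the right side of the implicit relation
  have h2 : HasDerivAt (fun z => 27 * (z + 14 * (R z) ^ 3 - 4 * R z) ^ 2)
      (27 * ((2 : ℕ) * (z₀ + 14 * (R z₀) ^ 3 - 4 * R z₀) ^ 1 *
        (1 + 14 * ((3 : ℕ) * R z₀ ^ 2 * R' z₀) - 4 * R' z₀))) z₀ := by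
    exact ((((hasDerivAt_id z₀).add ((hRz.pow 3).const_mul 14)).sub
      (hRz.const_mul 4)).pow 2).const_mul 27
  have hdiff := h1.sub h2
  have hg0 : HasDerivAt (fun z => 20 * (1 - 3 * (R z) ^ 2) ^ 3
      - 27 * (z + 14 * (R z) ^ 3 - 4 * R z) ^ 2) 0 z₀ := by
    refine (hasDerivAt_const z₀ (0 : ℝ)).congr_of_eventuallyEq ?_
    filter_upwards [hI.mem_nhds hz₀] with x hx
    have := himpl x hx
    linarith
  have hkey := hdiff.unique hg0
  -- hkey gives R' z₀ * P = 54 * S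
  have h1' : R' z₀ * (-360 * R z₀ * (1 - 3 * (R z₀) ^ 2) ^ 2
      - 54 * (z₀ + 14 * (R z₀) ^ 3 - 4 * R z₀) * (42 * (R z₀) ^ 2 - 4))
      = 54 * (z₀ + 14 * (R z₀) ^ 3 - 4 * R z₀) := by
    push_cast at hkey
    ring_nf at hkey ⊢
    linarith
  have hQ : 20 * (1 - 3 * (R z₀) ^ 2) ^ 3
      - 27 * (z₀ + 14 * (R z₀) ^ 3 - 4 * R z₀) ^ 2 = 0 := by
    have := himpl z₀ hz₀; linarith
  rw [eq_div_iff hden]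
  apply mul_left_cancel₀ hFR
  linear_combination (9 * (54 * (R z₀) ^ 3 - 9 * R z₀ + z₀) * (2 * R z₀ + 3 * z₀)) * h1'
    + (-2916 * (R z₀) ^ 3 + 306 * R z₀ - 54 * z₀) * hQ
end

section
/- Let σ ↦ (R(σ), z(σ)) be defined by R = √10 (σ+1)/(6√(9σ²−10σ+5)) and z = −√10 (σ−1)(σ²−10σ+5)/(9σ²−10σ+5)^{3/2}. Then for all σ with 9σ²−10σ+5 > 0, the pair (R, z) satisfies the algebraic relation 20(1−3R²)³ − 27(z + 14R³ − 4R)² = 0. -/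
/-!
Put `s = √(9σ² − 10σ + 5)` and `u = (7σ − 5)/(6s)`. Since
`36 s² − 30 (σ + 1)² = 6 (7σ − 5)²`, the curve satisfies `1 − 3R² = 6u²`, and similarly
`z + 14R³ − 4R = −4√10 u³`. Both sides of the relation are then multiples of `u⁶`,
with `20 · 6³ = 27 · 160`.
-/

open Real

namespace ParametricCurve

lemma quadratic_pos (σ : ℝ) : 0 < 9 * σ ^ 2 - 10 * σ + 5 := by
  nlinarith [sq_nonneg (3 * σ - 5 / 3)]

lemma rpow_three_halves_eq_sqrt_pow {x : ℝ} (hx : 0 ≤ x) : x ^ ((3 : ℝ) / 2) = √x ^ 3 := by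
  rw [rpow_div_two_eq_sqrt _ hx]
  exact_mod_cast rpow_natCast (√x) 3

lemma cusp_eq_zero {a : ℝ} (u : ℝ) (ha : a ^ 2 = 160) :
    20 * (6 * u ^ 2) ^ 3 - 27 * (a * u ^ 3) ^ 2 = 0 := by
  linear_combination (-27 * u ^ 6) * ha

noncomputable def radius (σ : ℝ) : ℝ := √10 * (σ + 1) / (6 * √(9 * σ ^ 2 - 10 * σ + 5))

noncomputable def height (σ : ℝ) : ℝ :=
  -(√10 * (σ - 1) * (σ ^ 2 - 10 * σ + 5)) / √(9 * σ ^ 2 - 10 * σ + 5) ^ 3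

noncomputable def cuspParam (σ : ℝ) : ℝ := (7 * σ - 5) / (6 * √(9 * σ ^ 2 - 10 * σ + 5))

section

variable (σ : ℝ)

lemma sq_sqrt_quadratic : √(9 * σ ^ 2 - 10 * σ + 5) ^ 2 = 9 * σ ^ 2 - 10 * σ + 5 :=
  sq_sqrt (quadratic_pos σ).le

lemma sqrt_quadratic_ne_zero : √(9 * σ ^ 2 - 10 * σ + 5) ≠ 0 :=
  (sqrt_pos.mpr (quadratic_pos σ)).ne'

lemma one_sub_three_mul_radius_sq : 1 - 3 * radius σ ^ 2 = 6 * cuspParam σ ^ 2 := by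
  have hs0 := sqrt_quadratic_ne_zero σ
  have hs2 := sq_sqrt_quadratic σ
  unfold radius cuspParam
  generalize √(9 * σ ^ 2 - 10 * σ + 5) = s at hs0 hs2 ⊢
  field_simp
  rw [sq_sqrt (by norm_num : (0 : ℝ) ≤ 10)]
  linear_combination 36 * hs2

lemma height_add_radius : height σ + 14 * radius σ ^ 3 - 4 * radius σ =
    -4 * √10 * cuspParam σ ^ 3 := by
  have hs0 := sqrt_quadratic_ne_zero σ
  have hs2 := sq_sqrt_quadratic σ
  unfold height radius cuspParam
  generalize √(9 * σ ^ 2 - 10 * σ + 5) = s at hs0 hs2 ⊢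
  field_simp
  rw [sq_sqrt (by norm_num : (0 : ℝ) ≤ 10)]
  linear_combination (-144 * (σ + 1)) * hs2

end

end ParametricCurve

open ParametricCurve in
theorem parametric_algebraic_solution_general (σ : ℝ) :
    let R : ℝ := Real.sqrt 10 * (σ + 1) / (6 * Real.sqrt (9 * σ ^ 2 - 10 * σ + 5))
    let z : ℝ := -(Real.sqrt 10 * (σ - 1) * (σ ^ 2 - 10 * σ + 5))
      / (9 * σ ^ 2 - 10 * σ + 5) ^ ((3 : ℝ) / 2)
    20 * (1 - 3 * R ^ 2) ^ 3 - 27 * (z + 14 * R ^ 3 - 4 * R) ^ 2 = 0 := by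
  intro R z
  have hz : z = height σ := by
    simp only [z, height, rpow_three_halves_eq_sqrt_pow (quadratic_pos σ).le]
  have hcoeff : (-4 * √10) ^ 2 = 160 := by
    rw [mul_pow, sq_sqrt (by norm_num : (0 : ℝ) ≤ 10)]
    norm_num
  rw [hz, show R = radius σ from rfl, one_sub_three_mul_radius_sq, height_add_radius]
  exact cusp_eq_zero _ hcoeff

/-- the parametric curve
`R = √10(σ+1)/(6√(9σ²−10σ+5))`,
`z = −√10(σ−1)(σ²−10σ+5)/(9σ²−10σ+5)^{3/2}`
lies on the algebraic curve `20(1−3R²)³ − 27(z + 14R³ − 4R)² = 0`. -/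
theorem parametric_algebraic_solution (σ : ℝ)
    (hpos : 9 * σ ^ 2 - 10 * σ + 5 > 0) :
    let R : ℝ := Real.sqrt 10 * (σ + 1) / (6 * Real.sqrt (9 * σ ^ 2 - 10 * σ + 5))
    let z : ℝ := -(Real.sqrt 10 * (σ - 1) * (σ ^ 2 - 10 * σ + 5))
      / (9 * σ ^ 2 - 10 * σ + 5) ^ ((3 : ℝ) / 2)
    20 * (1 - 3 * R ^ 2) ^ 3 - 27 * (z + 14 * R ^ 3 - 4 * R) ^ 2 = 0 :=
  parametric_algebraic_solution_general σ
end

section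
/- Let w(s) be a nonvanishing C¹ solution of the hypergeometric equation s(1−s)w'' + (1/2 − (5/6)s)w' + (35/144)w = 0 on an interval where 144 s(s−1) (w')² + 5 w² > 0. Define R(s) = ε√15 w / (3√(144 s(s−1)(w')² + 5w²)) and z(s) = −8ε√15 (144 s²(s−1)(w')³ − 72 s(s−1)w(w')² + (5/12)w³) / (3(144 s(s−1)(w')² + 5w²)^{3/2}) with ε = ±1. Then wherever dz/ds ≠ 0 and 9(54R³ − 9R + z)(2R + 3z) ≠ 0, the function R, regarded as a function of z, satisfies dR/dz = (486R⁴ − 171R² + 9zR + 5)/(9(54R³ − 9R + z)(2R + 3z)). -/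
open Real Filter Topology

/-! Along a solution of the hypergeometric equation, the equation collapses the derivatives
of `D = 144 s(s-1)w'² + 5w²` and of the cubic `P` in the numerator of `z` to
`D' = 16 w'(3 s w' + 5 w)` and `P' = (27/4) w w'(12 s w' - 5 w)`. With `c = ε√15` and `a = √D`
we have `R = c w/(3a)` and `z = -8 c P/(3a³)`; both are odd in `c/a`, and the Kudashev
right-hand side only involves `R²`, `R z` and `z²`, so `c² = 15`, `a² = D` make it a rational
function of `(s, w, w')`. So is `R'/z' = -D(w' D - w D'/2)/(8(P' D - (3/2) P D'))`, and the two
agree by a polynomial identity. -/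

noncomputable def kudashevD (s u v : ℝ) : ℝ := 144 * s * (s - 1) * v ^ 2 + 5 * u ^ 2

noncomputable def kudashevP (s u v : ℝ) : ℝ :=
  144 * s ^ 2 * (s - 1) * v ^ 3 - 72 * s * (s - 1) * u * v ^ 2 + 5 / 12 * u ^ 3

noncomputable def kudashevRHS (R z : ℝ) : ℝ :=
  (486 * R ^ 4 - 171 * R ^ 2 + 9 * z * R + 5) /
    (9 * (54 * R ^ 3 - 9 * R + z) * (2 * R + 3 * z))

theorem HasDerivAt.div_rpow_const {f g : ℝ → ℝ} {f' g' x : ℝ} (p : ℝ) (hf : HasDerivAt f f' x)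
    (hg : HasDerivAt g g' x) (hx : 0 < g x) :
    HasDerivAt (fun y => f y / g y ^ p) ((f' * g x - p * f x * g') / g x ^ (p + 1)) x := by
  have hgp := rpow_pos_of_pos hx p
  refine (hf.div (hg.rpow_const (Or.inl hx.ne')) hgp.ne').congr_deriv ?_
  rw [rpow_add_one hx.ne', rpow_sub_one hx.ne']
  field_simp

section HypergeometricSolution

variable {w w' w'' : ℝ → ℝ} {s : ℝ}

theorem hasDerivAt_kudashevD (hw : HasDerivAt w (w' s) s) (hw' : HasDerivAt w' (w'' s) s)
    (hODE : s * (1 - s) * w'' s + (1 / 2 - 5 / 6 * s) * w' s + 35 / 144 * w s = 0) :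
    HasDerivAt (fun x => kudashevD x (w x) (w' x)) (16 * w' s * (3 * s * w' s + 5 * w s)) s := by
  have h := ((((hasDerivAt_id' s).const_mul 144).mul ((hasDerivAt_id' s).sub_const 1)).mul
    (hw'.pow 2)).add ((hw.pow 2).const_mul 5)
  refine h.congr_deriv ?_
  simp only [Pi.mul_apply, Pi.pow_apply]
  linear_combination (-288 * w' s) * hODE

theorem hasDerivAt_kudashevP (hw : HasDerivAt w (w' s) s) (hw' : HasDerivAt w' (w'' s) s)
    (hODE : s * (1 - s) * w'' s + (1 / 2 - 5 / 6 * s) * w' s + 35 / 144 * w s = 0) :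
    HasDerivAt (fun x => kudashevP x (w x) (w' x))
      (27 / 4 * w s * w' s * (12 * s * w' s - 5 * w s)) s := by
  have h := (((((hasDerivAt_pow 2 s).const_mul 144).mul ((hasDerivAt_id' s).sub_const 1)).mul
    (hw'.pow 3)).sub (((((hasDerivAt_id' s).const_mul 72).mul
    ((hasDerivAt_id' s).sub_const 1)).mul hw).mul (hw'.pow 2))).add ((hw.pow 3).const_mul (5 / 12))
  refine h.congr_deriv ?_
  simp only [Pi.mul_apply, Pi.pow_apply]
  linear_combination (-432 * s * w' s ^ 2 + 144 * w s * w' s) * hODE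

end HypergeometricSolution

theorem kudashevRHS_eq (R z : ℝ) :
    kudashevRHS R z = (486 * (R ^ 2) ^ 2 - 171 * R ^ 2 + 9 * (R * z) + 5) /
      (9 * (108 * (R ^ 2) ^ 2 + 162 * R ^ 2 * (R * z) - 18 * R ^ 2 - 25 * (R * z)
        + 3 * z ^ 2)) := by
  unfold kudashevRHS
  congr 1 <;> ring

theorem div_eq_kudashevRHS_of_parametrization {s u v a c R z Rd zd : ℝ} (ha : 0 < a)
    (ha2 : a ^ 2 = kudashevD s u v) (hc : c ^ 2 = 15)
    (hR : R = c / 3 * (u / a)) (hz : z = -8 * c / 3 * (kudashevP s u v / a ^ 3))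
    (hRd : Rd = c / 3 * ((v * kudashevD s u v - 1 / 2 * u * (16 * v * (3 * s * v + 5 * u)))
      / a ^ 3))
    (hzd : zd = -8 * c / 3 * ((27 / 4 * u * v * (12 * s * v - 5 * u) * kudashevD s u v
      - 3 / 2 * kudashevP s u v * (16 * v * (3 * s * v + 5 * u))) / a ^ 5))
    (hzd0 : zd ≠ 0) (hden : 9 * (54 * R ^ 3 - 9 * R + z) * (2 * R + 3 * z) ≠ 0) :
    Rd / zd = kudashevRHS R z := by
  set D := kudashevD s u v
  set P := kudashevP s u v
  set ρ := v * D - 1 / 2 * u * (16 * v * (3 * s * v + 5 * u))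
  set ζ := 27 / 4 * u * v * (12 * s * v - 5 * u) * D - 3 / 2 * P * (16 * v * (3 * s * v + 5 * u))
  have hD : D ≠ 0 := by rw [← ha2]; positivity
  have hc0 : c ≠ 0 := by rintro rfl; norm_num at hc
  have hR2 : R ^ 2 = 5 * u ^ 2 / (3 * D) := by
    rw [hR, ← ha2]; linear_combination (u ^ 2 / (9 * a ^ 2)) * hc
  have hRz : R * z = -40 * u * P / (3 * D ^ 2) := by
    rw [hR, hz, ← ha2]; linear_combination (-8 * u * P / (9 * a ^ 4)) * hc
  have hz2 : z ^ 2 = 320 * P ^ 2 / (3 * D ^ 3) := by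
    rw [hz, ← ha2]; linear_combination (64 * P ^ 2 / (9 * a ^ 6)) * hc
  have hζ : ζ ≠ 0 := by rintro h; rw [hzd, h] at hzd0; simp at hzd0
  have hratio : Rd / zd = -(D * ρ) / (8 * ζ) := by
    rw [hRd, hzd, ← ha2]; field_simp
  have hden' : 9 * (108 * (R ^ 2) ^ 2 + 162 * R ^ 2 * (R * z) - 18 * R ^ 2 - 25 * (R * z)
      + 3 * z ^ 2) ≠ 0 := by
    convert hden using 1; ring
  rw [hR2, hRz, hz2] at hden'
  rw [hratio, kudashevRHS_eq, hR2, hRz, hz2, div_eq_div_iff (mul_ne_zero (by norm_num) hζ) hden']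
  field_simp
  simp only [D, P, ρ, ζ, kudashevD, kudashevP]
  ring

/-- the hypergeometric parametric formulae
`R(s) = ε√15 w/(3√D)`,
`z(s) = −8ε√15(144s²(s−1)w_s³ − 72s(s−1)w w_s² + (5/12)w³)/(3 D^{3/2})`,
`D = 144 s(s−1)w_s² + 5w² > 0`, where `w` solves the hypergeometric equation
`s(1−s)w'' + (1/2 − (5/6)s)w' + (35/144)w = 0`, give a solution of the
Kudashev equation, `dR/dz` being computed as `(dR/ds)/(dz/ds)`. -/
theorem hypergeometric_solution_satisfies_kudashev
    (I : Set ℝ) (hI : IsOpen I) (ε : ℝ) (hε : ε = 1 ∨ ε = -1)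
    (w w' w'' R Rd z zd : ℝ → ℝ)
    (hw : ∀ s ∈ I, HasDerivAt w (w' s) s)
    (hw' : ∀ s ∈ I, HasDerivAt w' (w'' s) s)
    (hODE : ∀ s ∈ I,
      s * (1 - s) * w'' s + (1/2 - 5/6 * s) * w' s + 35/144 * w s = 0)
    (hD : ∀ s ∈ I, 144 * s * (s - 1) * (w' s) ^ 2 + 5 * (w s) ^ 2 > 0)
    (hRdef : ∀ s ∈ I, R s = ε * Real.sqrt 15 * w s
      / (3 * Real.sqrt (144 * s * (s - 1) * (w' s) ^ 2 + 5 * (w s) ^ 2)))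
    (hzdef : ∀ s ∈ I, z s = -8 * ε * Real.sqrt 15
      * (144 * s ^ 2 * (s - 1) * (w' s) ^ 3
          - 72 * s * (s - 1) * w s * (w' s) ^ 2 + 5/12 * (w s) ^ 3)
      / (3 * (144 * s * (s - 1) * (w' s) ^ 2 + 5 * (w s) ^ 2) ^ ((3 : ℝ) / 2)))
    (hR : ∀ s ∈ I, HasDerivAt R (Rd s) s)
    (hz : ∀ s ∈ I, HasDerivAt z (zd s) s) :
    ∀ s ∈ I, zd s ≠ 0 →
      9 * (54 * (R s) ^ 3 - 9 * R s + z s) * (2 * R s + 3 * z s) ≠ 0 →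
      Rd s / zd s
        = (486 * (R s) ^ 4 - 171 * (R s) ^ 2 + 9 * z s * R s + 5)
          / (9 * (54 * (R s) ^ 3 - 9 * R s + z s) * (2 * R s + 3 * z s)) := by
  intro s hs hzd0 hden
  have hDs : 0 < kudashevD s (w s) (w' s) := hD s hs
  have hc : (ε * √15) ^ 2 = 15 := by rcases hε with rfl | rfl <;> norm_num
  have hDd := hasDerivAt_kudashevD (hw s hs) (hw' s hs) (hODE s hs)
  have hPd := hasDerivAt_kudashevP (hw s hs) (hw' s hs) (hODE s hs)
  have hRev : R =ᶠ[𝓝 s] fun x =>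
      ε * √15 / 3 * (w x / kudashevD x (w x) (w' x) ^ (1 / 2 : ℝ)) := by
    filter_upwards [hI.mem_nhds hs] with x hx
    rw [hRdef x hx, kudashevD, ← sqrt_eq_rpow]; ring
  have hzev : z =ᶠ[𝓝 s] fun x =>
      -8 * (ε * √15) / 3 *
        (kudashevP x (w x) (w' x) / kudashevD x (w x) (w' x) ^ (3 / 2 : ℝ)) := by
    filter_upwards [hI.mem_nhds hs] with x hx
    rw [hzdef x hx, kudashevD, kudashevP]; ring
  have hsqrt (n : ℕ) :
      kudashevD s (w s) (w' s) ^ ((n : ℝ) / 2) = √(kudashevD s (w s) (w' s)) ^ n := by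
    rw [rpow_div_two_eq_sqrt _ hDs.le, rpow_natCast]
  have hRd := (hR s hs).unique
    ((((hw s hs).div_rpow_const _ hDd hDs).const_mul _).congr_of_eventuallyEq hRev)
  have hzd := (hz s hs).unique
    (((hPd.div_rpow_const _ hDd hDs).const_mul _).congr_of_eventuallyEq hzev)
  refine div_eq_kudashevRHS_of_parametrization (sqrt_pos.2 hDs) (sq_sqrt hDs.le) hc
    ?_ ?_ ?_ ?_ hzd0 hden
  · rw [hRev.eq_of_nhds, ← sqrt_eq_rpow]
  · rw [hzev.eq_of_nhds, ← hsqrt 3]; norm_num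
  · rw [hRd, ← hsqrt 3]; norm_num
  · rw [hzd, ← hsqrt 5]; norm_num
end

section
/- For R and z given parametrically by the hypergeometric solution formulae R = ε√15 w/(3√D), z = −8ε√15 (144s²(s−1)w_s³ − 72s(s−1)w w_s² + (5/12)w³)/(3 D^{3/2}) with D = 144s(s−1)w_s² + 5w² > 0 and w a solution of s(1−s)w'' + (1/2 − (5/6)s)w' + (35/144)w = 0, the combination (14R³ − 4R + z)²/(1 − 3R²)³ equals (20/27)·s/(s−1), independently of the choice of solution w. -/
/-!
The combination is an algebraic identity in the values `w = w(s)`, `w_s = w'(s)`.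
With `q = √D` and `c = ε√15` (so `c² = 15`), one has `1 − 3R² = 144s(s−1)w_s²/q²`, and in
`14R³ − 4R + z` everything except the `w_s³` term cancels, leaving `−384 c s²(s−1) w_s³/q³`.
In the quotient the powers of `q` and `w_s` cancel as well.
-/

section ModulusAlgebra

variable {c q s A P R z : ℝ}

lemma one_sub_three_mul_sq_eq (hc : c ^ 2 = 15) (hq0 : q ≠ 0)
    (hq : q ^ 2 = 144 * s * (s - 1) * P ^ 2 + 5 * A ^ 2) (hR : R = c * A / (3 * q)) :
    1 - 3 * R ^ 2 = 144 * s * (s - 1) * P ^ 2 / q ^ 2 := by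
  rw [hR]
  field_simp
  linear_combination (-A ^ 2) * hc + 3 * hq

lemma fourteen_mul_cube_sub_add_eq (hc : c ^ 2 = 15) (hq0 : q ≠ 0)
    (hq : q ^ 2 = 144 * s * (s - 1) * P ^ 2 + 5 * A ^ 2) (hR : R = c * A / (3 * q))
    (hz : z = -8 * c * (144 * s ^ 2 * (s - 1) * P ^ 3
        - 72 * s * (s - 1) * A * P ^ 2 + 5 / 12 * A ^ 3) / (3 * q ^ 3)) :
    14 * R ^ 3 - 4 * R + z = -384 * c * s ^ 2 * (s - 1) * P ^ 3 / q ^ 3 := by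
  rw [hR, hz]
  field_simp
  linear_combination (168 * c * A ^ 3) * hc - (432 * c * A) * hq

theorem modulus_combination_eq (hc : c ^ 2 = 15) (hq0 : q ≠ 0)
    (hq : q ^ 2 = 144 * s * (s - 1) * P ^ 2 + 5 * A ^ 2) (hR : R = c * A / (3 * q))
    (hz : z = -8 * c * (144 * s ^ 2 * (s - 1) * P ^ 3
        - 72 * s * (s - 1) * A * P ^ 2 + 5 / 12 * A ^ 3) / (3 * q ^ 3))
    (hs1 : s ≠ 1) (h3 : 1 - 3 * R ^ 2 ≠ 0) :
    (14 * R ^ 3 - 4 * R + z) ^ 2 / (1 - 3 * R ^ 2) ^ 3 = 20 / 27 * (s / (s - 1)) := by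
  have hden := one_sub_three_mul_sq_eq hc hq0 hq hR
  have hs0 : s ≠ 0 := by rintro rfl; simp [hden] at h3
  have hP0 : P ≠ 0 := by rintro rfl; simp [hden] at h3
  have hs1' : s - 1 ≠ 0 := sub_ne_zero.mpr hs1
  rw [fourteen_mul_cube_sub_add_eq hc hq0 hq hR hz, hden]
  field_simp
  linear_combination (384 ^ 2 * 27) * hc

end ModulusAlgebra

theorem kudashev_modulus_combination_general
    (I : Set ℝ) (ε : ℝ) (hε : ε = 1 ∨ ε = -1)
    (w w' R z : ℝ → ℝ)
    (hD : ∀ s ∈ I, 144 * s * (s - 1) * (w' s) ^ 2 + 5 * (w s) ^ 2 > 0)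
    (hRdef : ∀ s ∈ I, R s = ε * Real.sqrt 15 * w s
      / (3 * Real.sqrt (144 * s * (s - 1) * (w' s) ^ 2 + 5 * (w s) ^ 2)))
    (hzdef : ∀ s ∈ I, z s = -8 * ε * Real.sqrt 15
      * (144 * s ^ 2 * (s - 1) * (w' s) ^ 3
          - 72 * s * (s - 1) * w s * (w' s) ^ 2 + 5/12 * (w s) ^ 3)
      / (3 * (144 * s * (s - 1) * (w' s) ^ 2 + 5 * (w s) ^ 2) ^ ((3 : ℝ) / 2))) :
    ∀ s ∈ I, s ≠ 1 → 1 - 3 * (R s) ^ 2 ≠ 0 →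
      (14 * (R s) ^ 3 - 4 * R s + z s) ^ 2 / (1 - 3 * (R s) ^ 2) ^ 3
        = 20 / 27 * (s / (s - 1)) := by
  intro s hs hs1 h3
  have hD0 := (hD s hs).le
  have hc : (ε * √15) ^ 2 = 15 := by
    rcases hε with rfl | rfl <;> norm_num
  have hpow : (144 * s * (s - 1) * (w' s) ^ 2 + 5 * (w s) ^ 2) ^ ((3 : ℝ) / 2)
      = √(144 * s * (s - 1) * (w' s) ^ 2 + 5 * (w s) ^ 2) ^ 3 := by
    rw [Real.rpow_div_two_eq_sqrt _ hD0, ← Real.rpow_natCast]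
    norm_num
  refine modulus_combination_eq hc (Real.sqrt_pos.mpr (hD s hs)).ne' (Real.sq_sqrt hD0)
    ?_ ?_ hs1 h3
  · rw [hRdef s hs]
  · rw [hzdef s hs, hpow]
    ring

/-- for `R, z` given by the hypergeometric parametric formulae,
the combination `(14R³ − 4R + z)²/(1 − 3R²)³` equals `(20/27)·s/(s−1)`,
independently of the choice of solution `w`. -/
theorem kudashev_modulus_combination
    (I : Set ℝ) (hI : IsOpen I) (ε : ℝ) (hε : ε = 1 ∨ ε = -1)
    (w w' w'' R z : ℝ → ℝ)
    (hw : ∀ s ∈ I, HasDerivAt w (w' s) s)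
    (hw' : ∀ s ∈ I, HasDerivAt w' (w'' s) s)
    (hODE : ∀ s ∈ I,
      s * (1 - s) * w'' s + (1/2 - 5/6 * s) * w' s + 35/144 * w s = 0)
    (hD : ∀ s ∈ I, 144 * s * (s - 1) * (w' s) ^ 2 + 5 * (w s) ^ 2 > 0)
    (hRdef : ∀ s ∈ I, R s = ε * Real.sqrt 15 * w s
      / (3 * Real.sqrt (144 * s * (s - 1) * (w' s) ^ 2 + 5 * (w s) ^ 2)))
    (hzdef : ∀ s ∈ I, z s = -8 * ε * Real.sqrt 15
      * (144 * s ^ 2 * (s - 1) * (w' s) ^ 3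
          - 72 * s * (s - 1) * w s * (w' s) ^ 2 + 5/12 * (w s) ^ 3)
      / (3 * (144 * s * (s - 1) * (w' s) ^ 2 + 5 * (w s) ^ 2) ^ ((3 : ℝ) / 2))) :
    ∀ s ∈ I, s ≠ 1 → 1 - 3 * (R s) ^ 2 ≠ 0 →
      (14 * (R s) ^ 3 - 4 * R s + z s) ^ 2 / (1 - 3 * (R s) ^ 2) ^ 3
        = 20 / 27 * (s / (s - 1)) :=
  kudashev_modulus_combination_general I ε hε w w' R z hD hRdef hzdef
end

section
/- Suppose real numbers C, R, z, k satisfy 9(k²−1)C² + (3C² + 15R² − 5)(k²−2)² = 0 and C³ + (15R²−5)C + 70R³ − 20R + 5z = 0, with (1−2k²)(1+k²) ≠ 0 and 1 − 3R² ≠ 0. Then C = −3 (k⁴ − k² + 1)(14R³ − 4R + z) / ((1−2k²)(1+k²)(1 − 3R²)). -/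
/-- from the two compatibility relations one obtains the explicit
formula `C = −3(k⁴−k²+1)(14R³−4R+z)/((1−2k²)(1+k²)(1−3R²))`. -/
theorem elliptic_ansatz_C_formula
    (C R z k : ℝ)
    (h1 : 9 * (k ^ 2 - 1) * C ^ 2
        + (3 * C ^ 2 + 15 * R ^ 2 - 5) * (k ^ 2 - 2) ^ 2 = 0)
    (h2 : C ^ 3 + (15 * R ^ 2 - 5) * C + 70 * R ^ 3 - 20 * R + 5 * z = 0)
    (hk : (1 - 2 * k ^ 2) * (1 + k ^ 2) ≠ 0)
    (hR : 1 - 3 * R ^ 2 ≠ 0) :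
    C = -3 * (k ^ 4 - k ^ 2 + 1) * (14 * R ^ 3 - 4 * R + z)
      / ((1 - 2 * k ^ 2) * (1 + k ^ 2) * (1 - 3 * R ^ 2)) := by
  rw [eq_div_iff (mul_ne_zero hk hR)]
  linear_combination (3/5 * (k^4 - k^2 + 1)) * h2 - (C/5) * h1
end

section
/- Let v(φ) = A·Y(Bφ/Q) − C − R, where Y satisfies (Y')² = 4Y(Y−1)(1−k²−Y), and suppose the constants satisfy A − 12B² = 0, 4(2−k²)B² − C = 0, 12(k²−1)AB² + 3C² + 15R² − 5 = 0, and C³ + (15R²−5)C + 70R³ − 20R + 5z = 0, with Q ≠ 0. Then v satisfies Q² (v_φ)² + (1/3)v³ + R v² + (6R² − 5/3)v + 5R − 18R³ − (5/3)z = 0 identically in φ. -/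
/-- the elliptic ansatz `v(φ) = A·Y(Bφ/Q) − C − R`, with `Y`
satisfying `(Y')² = 4Y(Y−1)(1−k²−Y)` and the constants satisfying the four
compatibility relations, solves
`Q²(v_φ)² + (1/3)v³ + Rv² + (6R²−5/3)v + 5R − 18R³ − (5/3)z = 0`. -/
theorem elliptic_ansatz_solves_first_order_equation
    (A B C R z k Q : ℝ) (hQ : Q ≠ 0)
    (Y dY : ℝ → ℝ)
    (hY : ∀ p : ℝ, HasDerivAt Y (dY p) p)
    (hYode : ∀ p : ℝ,
      (dY p) ^ 2 = 4 * Y p * (Y p - 1) * (1 - k ^ 2 - Y p))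
    (h1 : A - 12 * B ^ 2 = 0)
    (h2 : 4 * (2 - k ^ 2) * B ^ 2 - C = 0)
    (h3 : 12 * (k ^ 2 - 1) * A * B ^ 2 + 3 * C ^ 2 + 15 * R ^ 2 - 5 = 0)
    (h4 : C ^ 3 + (15 * R ^ 2 - 5) * C + 70 * R ^ 3 - 20 * R + 5 * z = 0) :
    ∀ φ : ℝ,
      Q ^ 2 * (deriv (fun t => A * Y (B * t / Q) - C - R) φ) ^ 2
        + 1/3 * (A * Y (B * φ / Q) - C - R) ^ 3
        + R * (A * Y (B * φ / Q) - C - R) ^ 2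
        + (6 * R ^ 2 - 5/3) * (A * Y (B * φ / Q) - C - R)
        + 5 * R - 18 * R ^ 3 - 5/3 * z = 0 := by
  intro φ
  have hinner : HasDerivAt (fun t : ℝ => B * t / Q) (B / Q) φ := by
    simpa using ((hasDerivAt_id φ).const_mul B).div_const Q
  have hv : HasDerivAt (fun t => A * Y (B * t / Q) - C - R)
      (A * (dY (B * φ / Q) * (B / Q))) φ := by
    exact ((((hY (B * φ / Q)).comp φ hinner).const_mul A).sub_const C).sub_const R
  rw [hv.deriv]
  have hsq : Q ^ 2 * (A * (dY (B * φ / Q) * (B / Q))) ^ 2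
      = A ^ 2 * B ^ 2 * (dY (B * φ / Q)) ^ 2 := by
    field_simp
  rw [hsq]
  set y := Y (B * φ / Q) with hy
  linear_combination (A ^ 2 * y ^ 3 / 3) * h1 + (A ^ 2 * y ^ 2) * h2
    + (A * y / 3) * h3 - (1/3 : ℝ) * h4 + A ^ 2 * B ^ 2 * hYode (B * φ / Q)
end

section
/- In the solitonic limit, the function v(φ) = 3C·sech²(√C φ/(2Q)) − C − R satisfies Q²(v_φ)² + (1/3)v³ + Rv² + (6R² − 5/3)v + 5R − 18R³ − (5/3)z = 0 for all φ, provided C² = 5/3 − 5R² (i.e., 3C² + 15R² − 5 = 0), C > 0, and C³ + (15R² − 5)C + 70R³ − 20R + 5z = 0, Q ≠ 0. -/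
/-!
With `s = sech²(k φ)` and `k = √C / (2Q)`, the ansatz is the affine function `v = 3C s − C − R`
of `s`, and `tanh² = 1 − sech²` gives `(v_φ)² = 36 C² k² s² (1 − s)`, so `Q² (v_φ)² = 9 C³ s² (1 − s)`.
The left-hand side therefore becomes a cubic polynomial in `s`; its coefficients are combinations
of `3C² + 15R² − 5` and `C³ + (15R² − 5)C + 70R³ − 20R + 5z`, hence it vanishes identically.
-/

open Real

theorem tanh_sq_eq_one_sub_inv_cosh_sq (x : ℝ) : tanh x ^ 2 = 1 - (1 / cosh x) ^ 2 := by
  have hcosh : cosh x ≠ 0 := (cosh_pos x).ne'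
  rw [tanh_eq_sinh_div_cosh]
  field_simp
  linear_combination -cosh_sq' x

theorem hasDerivAt_inv_cosh_sq (x : ℝ) :
    HasDerivAt (fun t => (1 / cosh t) ^ 2) (-2 * (1 / cosh x) ^ 2 * tanh x) x := by
  have hcosh : cosh x ≠ 0 := (cosh_pos x).ne'
  have hinv : HasDerivAt (fun t => 1 / cosh t) (-sinh x / cosh x ^ 2) x := by
    simpa only [one_div] using (hasDerivAt_cosh x).fun_inv hcosh
  refine (hinv.fun_pow 2).congr_deriv ?_
  rw [tanh_eq_sinh_div_cosh]
  simp only [Nat.cast_ofNat, Nat.add_one_sub_one, pow_one]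
  field_simp

theorem sq_deriv_soliton_profile (C R k x : ℝ) :
    deriv (fun t => 3 * C * (1 / cosh (k * t)) ^ 2 - C - R) x ^ 2
      = 36 * C ^ 2 * k ^ 2 * ((1 / cosh (k * x)) ^ 2) ^ 2 * (1 - (1 / cosh (k * x)) ^ 2) := by
  have hprofile : HasDerivAt (fun t => 3 * C * (1 / cosh (k * t)) ^ 2 - C - R)
      (3 * C * (-2 * (1 / cosh (k * x)) ^ 2 * tanh (k * x) * k)) x :=
    ((((hasDerivAt_inv_cosh_sq (k * x)).comp x ((hasDerivAt_id x).const_mul k)).const_mul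
      (3 * C)).sub_const C).sub_const R |>.congr_deriv (by ring)
  rw [hprofile.deriv, ← tanh_sq_eq_one_sub_inv_cosh_sq]
  ring

theorem soliton_cubic_eq_zero {C R z : ℝ} (h3 : 3 * C ^ 2 + 15 * R ^ 2 - 5 = 0)
    (h4 : C ^ 3 + (15 * R ^ 2 - 5) * C + 70 * R ^ 3 - 20 * R + 5 * z = 0) (s : ℝ) :
    9 * C ^ 3 * (s ^ 2 * (1 - s)) + 1/3 * (3 * C * s - C - R) ^ 3 + R * (3 * C * s - C - R) ^ 2
      + (6 * R ^ 2 - 5/3) * (3 * C * s - C - R) + 5 * R - 18 * R ^ 3 - 5/3 * z = 0 := by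
  linear_combination (C * s) * h3 - 1/3 * h4

/-- the solitonic ansatz `v(φ) = 3C·sech²(√C φ/(2Q)) − C − R`
solves `Q²(v_φ)² + (1/3)v³ + Rv² + (6R²−5/3)v + 5R − 18R³ − (5/3)z = 0`,
provided `3C² + 15R² − 5 = 0`, `C > 0`,
`C³ + (15R²−5)C + 70R³ − 20R + 5z = 0` and `Q ≠ 0`. -/
theorem soliton_ansatz_solves_first_order_equation
    (C R z Q : ℝ) (hQ : Q ≠ 0) (hC : C > 0)
    (h3 : 3 * C ^ 2 + 15 * R ^ 2 - 5 = 0)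
    (h4 : C ^ 3 + (15 * R ^ 2 - 5) * C + 70 * R ^ 3 - 20 * R + 5 * z = 0) :
    ∀ φ : ℝ,
      Q ^ 2 * (deriv (fun t =>
            3 * C * (1 / Real.cosh (Real.sqrt C * t / (2 * Q))) ^ 2 - C - R) φ) ^ 2
        + 1/3 * (3 * C * (1 / Real.cosh (Real.sqrt C * φ / (2 * Q))) ^ 2 - C - R) ^ 3
        + R * (3 * C * (1 / Real.cosh (Real.sqrt C * φ / (2 * Q))) ^ 2 - C - R) ^ 2
        + (6 * R ^ 2 - 5/3) *
            (3 * C * (1 / Real.cosh (Real.sqrt C * φ / (2 * Q))) ^ 2 - C - R)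
        + 5 * R - 18 * R ^ 3 - 5/3 * z = 0 := by
  intro φ
  simp only [mul_div_right_comm (√C)]
  have hk : Q ^ 2 * (√C / (2 * Q)) ^ 2 = C / 4 := by
    field_simp
    rw [sq_sqrt hC.le]
    ring
  rw [sq_deriv_soliton_profile]
  set s := (1 / cosh (√C / (2 * Q) * φ)) ^ 2
  linear_combination (36 * C ^ 2 * s ^ 2 * (1 - s)) * hk + soliton_cubic_eq_zero h3 h4 s
end
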